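/- Coverings of racks are preserved and reflected by pullbacks along surjections: if f: A → B is a surjective rack homomorphism and p: E → B is a surjective rack homomorphism, and t: E ×_B A → E denotes the pullback projection, then f is a covering if and only if t is a covering. -/

import Mathlib

/-- A rack: a set with operations `◁`, `◁⁻¹` satisfying (R1) and (R2). -/
class PaperRack (X : Type*) where
  act : X → X → X
  inv : X → X → X
  r1a : ∀ x y, inv (act x y) y = x
  r1b : ∀ x y, act (inv x y) y = x
  r2 : ∀ x y z, act (act x y) z = act (act x z) (act y z)

infixl:70 " ◁ " => PaperRack.act
infixl:70 " ◁⁻¹ " => PaperRack.inv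

open Function

section Covering

variable {A B E : Type*} [PaperRack A]

def IsRackCovering (f : A → B) : Prop :=
  ∀ a b x : A, f a = f b → (x ◁ a) ◁⁻¹ b = x

theorem IsRackCovering.pullback_fst [PaperRack E] {f : A → B} (hf : IsRackCovering f)
    (p : E → B) {e₁ e₂ ex : E} {a₁ a₂ ax : A} (h₁ : p e₁ = f a₁) (h₂ : p e₂ = f a₂)
    (he : e₁ = e₂) : (ex ◁ e₁) ◁⁻¹ e₂ = ex ∧ (ax ◁ a₁) ◁⁻¹ a₂ = ax := by
  subst he
  exact ⟨PaperRack.r1a ex e₁, hf a₁ a₂ ax (h₁.symm.trans h₂)⟩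

-- Surjectivity of `p` lifts any `a, b, x` with `f a = f b` to points `(e, a), (e, b), (ex, x)`
-- of the pullback.
theorem IsRackCovering.of_pullback_fst {f : A → B} {p : E → B} (hp : Surjective p)
    (h : ∀ (e₁ e₂ ex : E) (a₁ a₂ ax : A), p e₁ = f a₁ → p e₂ = f a₂ → p ex = f ax →
      e₁ = e₂ → (ax ◁ a₁) ◁⁻¹ a₂ = ax) :
    IsRackCovering f := by
  intro a b x hab
  obtain ⟨e, he⟩ := hp (f a)
  obtain ⟨ex, hex⟩ := hp (f x)
  exact h e e ex a b x he (he.trans hab) hex rfl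

end Covering

theorem covering_pullback_along_surjection_general {A B E : Type*}
    [PaperRack A] [PaperRack E] (f : A → B) (p : E → B)
    (hfsurj : Function.Surjective f) (hpsurj : Function.Surjective p) :
    (∀ a b x : A, f a = f b → (x ◁ a) ◁⁻¹ b = x) ↔
      ((∀ e : E, ∃ a : A, p e = f a) ∧
        ∀ (e₁ e₂ ex : E) (a₁ a₂ ax : A),
          p e₁ = f a₁ → p e₂ = f a₂ → p ex = f ax → e₁ = e₂ →
            (ex ◁ e₁) ◁⁻¹ e₂ = ex ∧ (ax ◁ a₁) ◁⁻¹ a₂ = ax) := by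
  constructor
  · intro hf
    refine ⟨fun e => (hfsurj (p e)).imp fun _ => Eq.symm, ?_⟩
    intro e₁ e₂ ex a₁ a₂ ax h₁ h₂ _ he
    exact IsRackCovering.pullback_fst hf p h₁ h₂ he
  · rintro ⟨-, ht⟩
    exact IsRackCovering.of_pullback_fst hpsurj fun e₁ e₂ ex a₁ a₂ ax h₁ h₂ hx he =>
      (ht e₁ e₂ ex a₁ a₂ ax h₁ h₂ hx he).2

/-- Coverings are preserved and reflected by pullbacks along surjections:
given surjective rack homomorphisms `f : A → B` and `p : E → B`, the map `f` is a
covering if and only if the pullback projection `t : E ×_B A → E` (where the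
pullback `E ×_B A = {(e, a) | p e = f a}` is a subrack of the product `E × A`)
is a covering. -/
theorem covering_pullback_along_surjection {A B E : Type*}
    [PaperRack A] [PaperRack B] [PaperRack E] (f : A → B) (p : E → B)
    (hfact : ∀ x y : A, f (x ◁ y) = f x ◁ f y)
    (hfinv : ∀ x y : A, f (x ◁⁻¹ y) = f x ◁⁻¹ f y)
    (hpact : ∀ x y : E, p (x ◁ y) = p x ◁ p y)
    (hpinv : ∀ x y : E, p (x ◁⁻¹ y) = p x ◁⁻¹ p y)
    (hfsurj : Function.Surjective f) (hpsurj : Function.Surjective p) :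
    (∀ a b x : A, f a = f b → (x ◁ a) ◁⁻¹ b = x) ↔
      ((∀ e : E, ∃ a : A, p e = f a) ∧
        ∀ (e₁ e₂ ex : E) (a₁ a₂ ax : A),
          p e₁ = f a₁ → p e₂ = f a₂ → p ex = f ax → e₁ = e₂ →
            (ex ◁ e₁) ◁⁻¹ e₂ = ex ∧ (ax ◁ a₁) ◁⁻¹ a₂ = ax) :=
  covering_pullback_along_surjection_general f p hfsurj hpsurj
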